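/- arXiv:1212.2681 — 6 statements merged into one kernel-verified Lean document; each statement's English description precedes it below -/
import Mathlib

section
/- With θ_{a,b} defined as the argument (divided by 2π) of a + bη, η = (1+√(-7))/2: if 4θ_{a,b} is not an integer, then 1/|sin(4πθ_{a,b})| ≤ √(a² + ab + 2b²) · max{1/|a + b/2|, 1/|b|}. -/
/-!
The hypothesis says that `2πθ` is the argument of `a + bη = x + iy`, with `x = a + b/2` and
`y = b√7/2`. Hence `sin (4πθ) = 2xy / (x² + y²) = (a + b/2) b √7 / N`, where
`N = a² + ab + 2b² = (a + b/2)² + 7b²/4`, and the bound reduces to `√N ≤ √7 · max |a + b/2| |b|`,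
which holds because `N ≤ (1 + 7/4) · max (a + b/2)² b²`.
-/

open Complex Real

noncomputable def eta7 : ℂ := (1 + Complex.I * Real.sqrt 7) / 2

@[simp]
lemma eta7_re : eta7.re = 1 / 2 := by
  simp [eta7]

@[simp]
lemma eta7_im : eta7.im = √7 / 2 := by
  simp [eta7]

lemma normSq_ofReal_add_ofReal_mul_eta7 (a b : ℝ) :
    normSq (a + b * eta7) = (a + b / 2) ^ 2 + 7 / 4 * b ^ 2 := by
  have h7 : √7 * √7 = 7 := Real.mul_self_sqrt (by norm_num)
  simp only [normSq_apply, add_re, add_im, mul_re, mul_im, ofReal_re, ofReal_im, eta7_re, eta7_im]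
  linear_combination b ^ 2 / 4 * h7

lemma Real.sin_two_mul_of_cexp_eq_div_norm {z : ℂ} {t : ℝ} (h : cexp (t * I) = z / ‖z‖) :
    Real.sin (2 * t) = 2 * z.re * z.im / ‖z‖ ^ 2 := by
  have hcos : Real.cos t = z.re / ‖z‖ := by rw [← exp_ofReal_mul_I_re, h, div_ofReal_re]
  have hsin : Real.sin t = z.im / ‖z‖ := by rw [← exp_ofReal_mul_I_im, h, div_ofReal_im]
  rw [Real.sin_two_mul, hsin, hcos]
  ring

lemma sq_div_mul_le_mul_max_one_div {s c p q : ℝ} (hs : 0 ≤ s) (hc : 0 < c) (hp : 0 < p)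
    (hq : 0 < q) (h : s ≤ c * max p q) : s ^ 2 / (c * (p * q)) ≤ s * max (1 / p) (1 / q) := by
  wlog hpq : p ≤ q generalizing p q
  · simpa only [max_comm, mul_comm p q] using this hq hp (by rwa [max_comm]) (le_of_not_ge hpq)
  rw [max_eq_right hpq] at h
  rw [max_eq_left (one_div_le_one_div_of_le hp hpq), div_le_iff₀ (by positivity)]
  calc s ^ 2 = s * s := sq s
    _ ≤ s * (c * q) := mul_le_mul_of_nonneg_left h hs
    _ = s * (1 / p) * (c * (p * q)) := by field_simp

lemma sqrt_add_seven_div_four_mul_sq_le (x y : ℝ) :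
    √(x ^ 2 + 7 / 4 * y ^ 2) ≤ √7 * max |x| |y| := by
  set m := max |x| |y|
  have hx : x ^ 2 ≤ m ^ 2 := by
    rw [← sq_abs]; exact pow_le_pow_left₀ (abs_nonneg x) (le_max_left _ _) 2
  have hy : y ^ 2 ≤ m ^ 2 := by
    rw [← sq_abs]; exact pow_le_pow_left₀ (abs_nonneg y) (le_max_right _ _) 2
  calc √(x ^ 2 + 7 / 4 * y ^ 2) ≤ √(7 * m ^ 2) := Real.sqrt_le_sqrt (by linarith [sq_nonneg m])
    _ = √7 * m := by rw [Real.sqrt_mul (by norm_num), Real.sqrt_sq (by positivity)]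

lemma one_div_abs_mul_mul_sqrt_seven_div_le (x y : ℝ) :
    1 / |x * y * √7 / (x ^ 2 + 7 / 4 * y ^ 2)| ≤
      √(x ^ 2 + 7 / 4 * y ^ 2) * max (1 / |x|) (1 / |y|) := by
  by_cases hxy : x = 0 ∨ y = 0
  · -- the left side is `1 / 0 = 0`
    have hzero : x * y * √7 = 0 := by rcases hxy with rfl | rfl <;> ring
    rw [hzero, zero_div, abs_zero, div_zero]
    positivity
  obtain ⟨hx, hy⟩ := not_or.mp hxy
  have hN : 0 < x ^ 2 + 7 / 4 * y ^ 2 := by positivity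
  have hlhs : 1 / |x * y * √7 / (x ^ 2 + 7 / 4 * y ^ 2)| =
      √(x ^ 2 + 7 / 4 * y ^ 2) ^ 2 / (√7 * (|x| * |y|)) := by
    rw [Real.sq_sqrt hN.le, abs_div, abs_of_pos hN, abs_mul, abs_mul,
      abs_of_pos (by positivity : (0 : ℝ) < √7)]
    field_simp
  rw [hlhs]
  exact sq_div_mul_le_mul_max_one_div (by positivity) (by positivity) (abs_pos.mpr hx)
    (abs_pos.mpr hy) (sqrt_add_seven_div_four_mul_sq_le x y)

theorem inv_sin_four_pi_theta_bound_general (a b : ℤ) (θ : ℝ)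
    (hθ : Complex.exp (2 * π * Complex.I * θ) =
      ((a : ℂ) + (b : ℂ) * eta7) / Real.sqrt ((a : ℝ)^2 + a * b + 2 * b^2)) :
    1 / |Real.sin (4 * π * θ)| ≤
      Real.sqrt ((a : ℝ)^2 + a * b + 2 * b^2) *
        max (1 / |(a : ℝ) + b / 2|) (1 / |(b : ℝ)|) := by
  have hN : (a : ℝ)^2 + a * b + 2 * b^2 = ((a : ℝ) + b / 2) ^ 2 + 7 / 4 * (b : ℝ) ^ 2 := by ring
  rw [hN] at hθ ⊢
  set z : ℂ := (a : ℝ) + (b : ℝ) * eta7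
  have hnorm : √(((a : ℝ) + b / 2) ^ 2 + 7 / 4 * (b : ℝ) ^ 2) = ‖z‖ := by
    rw [norm_def, normSq_ofReal_add_ofReal_mul_eta7]
  have hexp : cexp ((2 * π * θ : ℝ) * I) = z / ‖z‖ := by
    rw [← hnorm, show z = (a : ℂ) + b * eta7 by simp [z], ← hθ]
    push_cast
    ring_nf
  have hsin : Real.sin (4 * π * θ) =
      ((a : ℝ) + b / 2) * b * √7 / (((a : ℝ) + b / 2) ^ 2 + 7 / 4 * (b : ℝ) ^ 2) := by
    rw [show 4 * π * θ = 2 * (2 * π * θ) by ring, Real.sin_two_mul_of_cexp_eq_div_norm hexp,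
      ← hnorm, Real.sq_sqrt (by positivity)]
    simp only [z, add_re, add_im, mul_re, mul_im, ofReal_re, ofReal_im, eta7_re, eta7_im]
    ring
  rw [hsin]
  exact one_div_abs_mul_mul_sqrt_seven_div_le _ _

theorem inv_sin_four_pi_theta_bound (a b : ℤ) (hab : ¬(a = 0 ∧ b = 0)) (θ : ℝ)
    (hθ : Complex.exp (2 * π * Complex.I * θ) =
      ((a : ℂ) + (b : ℂ) * eta7) / Real.sqrt ((a : ℝ)^2 + a * b + 2 * b^2))
    (hnint : ¬∃ k : ℤ, 4 * θ = k) :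
    1 / |Real.sin (4 * π * θ)| ≤
      Real.sqrt ((a : ℝ)^2 + a * b + 2 * b^2) *
        max (1 / |(a : ℝ) + b / 2|) (1 / |(b : ℝ)|) :=
  inv_sin_four_pi_theta_bound_general a b θ hθ
end

section
/- For integers a, b of either sign with b ≠ 0 and 2a ≠ -b, and N ≥ 2, we have ∑_{a,b} e^{-(a²+ab+2b²)/N} · (1/|a + b/2| + 1/|b|) ≪ N^{1/2} log N. -/
open Real

open Finset in
lemma geomNat (c : ℝ) (hc : 0 < c) (T : Finset ℕ) :
    ∑ m ∈ T, Real.exp (-(m * c)) ≤ Real.exp c / c := by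
  have hr0 : (0:ℝ) ≤ Real.exp (-c) := (Real.exp_pos _).le
  have hr1 : Real.exp (-c) < 1 := Real.exp_lt_one_iff.mpr (by linarith)
  have hsum : Summable (fun m : ℕ => Real.exp (-c) ^ m) :=
    summable_geometric_of_lt_one hr0 hr1
  have h1 : ∑ m ∈ T, Real.exp (-(m * c)) = ∑ m ∈ T, Real.exp (-c) ^ m := by
    refine Finset.sum_congr rfl fun m _ => ?_
    rw [← Real.exp_nat_mul]; ring_nf
  rw [h1]
  have h2 : ∑ m ∈ T, Real.exp (-c) ^ m ≤ ∑' m : ℕ, Real.exp (-c) ^ m :=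
    Summable.sum_le_tsum T (fun m _ => pow_nonneg hr0 m) hsum
  rw [tsum_geometric_of_lt_one hr0 hr1] at h2
  refine h2.trans ?_
  rw [inv_eq_one_div, div_le_div_iff₀ (by linarith) hc]
  have h3 : c + 1 ≤ Real.exp c := Real.add_one_le_exp c
  have h4 : Real.exp c * Real.exp (-c) = 1 := by
    rw [← Real.exp_add]; simp
  nlinarith

lemma gaussNat (M : ℝ) (hM : 1 ≤ M) (T : Finset ℕ) :
    ∑ m ∈ T, Real.exp (-((m:ℝ)^2 / M)) ≤ 5 * Real.sqrt M := by
  have hM0 : (0:ℝ) < M := by linarith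
  have hs1 : 1 ≤ Real.sqrt M := by
    rw [show (1:ℝ) = Real.sqrt 1 by simp]; exact Real.sqrt_le_sqrt hM
  have hs0 : 0 < Real.sqrt M := by linarith
  have hsq : Real.sqrt M * Real.sqrt M = M := Real.mul_self_sqrt hM0.le
  have hterm : ∀ m ∈ T, Real.exp (-((m:ℝ)^2 / M)) ≤
      (if (m:ℝ) ≤ Real.sqrt M then (1:ℝ) else 0) + Real.exp (-(m * (1 / Real.sqrt M))) := by
    intro m _
    by_cases h : (m:ℝ) ≤ Real.sqrt M
    · simp only [h, if_true]
      have h1 : Real.exp (-((m:ℝ)^2 / M)) ≤ 1 := by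
        apply Real.exp_le_one_iff.mpr
        have : (0:ℝ) ≤ (m:ℝ)^2 / M := by positivity
        linarith
      have h2 : (0:ℝ) ≤ Real.exp (-(m * (1 / Real.sqrt M))) := (Real.exp_pos _).le
      linarith
    · simp only [h, if_false, zero_add]
      apply Real.exp_le_exp.mpr
      push_neg at h
      have hm0 : (0:ℝ) ≤ (m:ℝ) := Nat.cast_nonneg m
      rw [neg_le_neg_iff, mul_one_div, div_le_div_iff₀ hs0 hM0]
      nlinarith [mul_nonneg (mul_nonneg hm0 hs0.le) (sub_nonneg.mpr h.le)]
  refine (Finset.sum_le_sum hterm).trans ?_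
  rw [Finset.sum_add_distrib]
  have hcard : ∑ m ∈ T, (if (m:ℝ) ≤ Real.sqrt M then (1:ℝ) else 0) ≤ Real.sqrt M + 1 := by
    rw [Finset.sum_boole]
    have hsub : T.filter (fun m : ℕ => (m:ℝ) ≤ Real.sqrt M) ⊆ Finset.range (⌊Real.sqrt M⌋₊ + 1) := by
      intro m hm
      simp only [Finset.mem_filter] at hm
      rw [Finset.mem_range, Nat.lt_succ_iff]
      exact Nat.le_floor hm.2
    calc ((T.filter (fun m : ℕ => (m:ℝ) ≤ Real.sqrt M)).card : ℝ)
        ≤ ((Finset.range (⌊Real.sqrt M⌋₊ + 1)).card : ℝ) := by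
          exact_mod_cast Finset.card_le_card hsub
      _ = (⌊Real.sqrt M⌋₊ : ℝ) + 1 := by simp
      _ ≤ Real.sqrt M + 1 := by
          have := Nat.floor_le (Real.sqrt_nonneg M); linarith
  have hgeom : ∑ m ∈ T, Real.exp (-(m * (1 / Real.sqrt M))) ≤ 3 * Real.sqrt M := by
    refine (geomNat (1 / Real.sqrt M) (by positivity) T).trans ?_
    rw [div_div_eq_mul_div, div_one]
    have h1 : Real.exp (1 / Real.sqrt M) ≤ Real.exp 1 :=
      Real.exp_le_exp.mpr (by rw [div_le_one hs0]; exact hs1)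
    have h2 : Real.exp 1 < 2.7182818286 := Real.exp_one_lt_d9
    nlinarith
  linarith

lemma logNat (M : ℝ) (hM : 1 ≤ M) (T : Finset ℕ) (hT : ∀ m ∈ T, 1 ≤ m) :
    ∑ m ∈ T, Real.exp (-((m:ℝ)^2 / M)) / m ≤ 4 + Real.log M := by
  have hM0 : (0:ℝ) < M := by linarith
  have hs1 : 1 ≤ Real.sqrt M := by
    rw [show (1:ℝ) = Real.sqrt 1 by simp]; exact Real.sqrt_le_sqrt hM
  have hs0 : 0 < Real.sqrt M := by linarith
  have hsq : Real.sqrt M * Real.sqrt M = M := Real.mul_self_sqrt hM0.le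
  have hterm : ∀ m ∈ T, Real.exp (-((m:ℝ)^2 / M)) / m ≤
      (if (m:ℝ) ≤ Real.sqrt M then 1/(m:ℝ) else 0)
        + Real.exp (-(m * (1 / Real.sqrt M))) * (1 / Real.sqrt M) := by
    intro m hm
    have hm1 : (1:ℝ) ≤ (m:ℝ) := by exact_mod_cast hT m hm
    have hm0 : (0:ℝ) < (m:ℝ) := by linarith
    by_cases h : (m:ℝ) ≤ Real.sqrt M
    · simp only [h, if_true]
      have h1 : Real.exp (-((m:ℝ)^2 / M)) ≤ 1 := by
        apply Real.exp_le_one_iff.mpr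
        have : (0:ℝ) ≤ (m:ℝ)^2 / M := by positivity
        linarith
      have h2 : Real.exp (-((m:ℝ)^2 / M)) / m ≤ 1 / m := by gcongr
      have h3 : 0 ≤ Real.exp (-(m * (1 / Real.sqrt M))) * (1 / Real.sqrt M) := by positivity
      linarith
    · simp only [h, if_false, zero_add]
      push_neg at h
      have e1 : Real.exp (-((m:ℝ)^2 / M)) ≤ Real.exp (-(m * (1 / Real.sqrt M))) := by
        apply Real.exp_le_exp.mpr
        rw [neg_le_neg_iff, mul_one_div, div_le_div_iff₀ hs0 hM0]
        nlinarith [mul_nonneg (mul_nonneg hm0.le hs0.le) (sub_nonneg.mpr h.le)]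
      have e2 : 1 / (m:ℝ) ≤ 1 / Real.sqrt M := by
        apply one_div_le_one_div_of_le hs0 h.le
      calc Real.exp (-((m:ℝ)^2 / M)) / m
          = Real.exp (-((m:ℝ)^2 / M)) * (1/m) := by rw [mul_one_div]
        _ ≤ Real.exp (-(m * (1 / Real.sqrt M))) * (1 / Real.sqrt M) := by
            apply mul_le_mul e1 e2 (by positivity) (Real.exp_pos _).le
  refine (Finset.sum_le_sum hterm).trans ?_
  rw [Finset.sum_add_distrib]
  have hharm : ∑ m ∈ T, (if (m:ℝ) ≤ Real.sqrt M then 1/(m:ℝ) else 0)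
      ≤ 1 + Real.log M / 2 := by
    rw [Finset.sum_ite, Finset.sum_const_zero, add_zero]
    have hsub : T.filter (fun m : ℕ => (m:ℝ) ≤ Real.sqrt M) ⊆ Finset.Icc 1 ⌊Real.sqrt M⌋₊ := by
      intro m hm
      simp only [Finset.mem_filter] at hm
      exact Finset.mem_Icc.mpr ⟨hT m hm.1, Nat.le_floor hm.2⟩
    calc ∑ m ∈ T.filter (fun m : ℕ => (m:ℝ) ≤ Real.sqrt M), 1/(m:ℝ)
        ≤ ∑ m ∈ Finset.Icc 1 ⌊Real.sqrt M⌋₊, 1/(m:ℝ) := by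
          apply Finset.sum_le_sum_of_subset_of_nonneg hsub
          intro i _ _; positivity
      _ = ((harmonic ⌊Real.sqrt M⌋₊ : ℚ) : ℝ) := by
          rw [harmonic_eq_sum_Icc]; push_cast [one_div]; rfl
      _ ≤ 1 + Real.log (Real.sqrt M) := harmonic_floor_le_one_add_log _ hs1
      _ = 1 + Real.log M / 2 := by rw [Real.log_sqrt hM0.le]
  have hgeom : ∑ m ∈ T, Real.exp (-(m * (1 / Real.sqrt M))) * (1 / Real.sqrt M) ≤ 3 := by
    rw [← Finset.sum_mul]
    have h1 : ∑ m ∈ T, Real.exp (-(m * (1 / Real.sqrt M))) ≤ 3 * Real.sqrt M := by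
      refine (geomNat (1 / Real.sqrt M) (by positivity) T).trans ?_
      rw [div_div_eq_mul_div, div_one]
      have h1 : Real.exp (1 / Real.sqrt M) ≤ Real.exp 1 :=
        Real.exp_le_exp.mpr (by rw [div_le_one hs0]; exact hs1)
      have h2 : Real.exp 1 < 2.7182818286 := Real.exp_one_lt_d9
      nlinarith
    calc (∑ m ∈ T, Real.exp (-(m * (1 / Real.sqrt M)))) * (1 / Real.sqrt M)
        ≤ 3 * Real.sqrt M * (1 / Real.sqrt M) := by
          apply mul_le_mul_of_nonneg_right h1 (by positivity)
      _ = 3 := by field_simp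
  have hlog : 0 ≤ Real.log M := Real.log_nonneg hM
  linarith

lemma sumGaussInt (M : ℝ) (hM : 1 ≤ M) (S : Finset ℤ) (t : ℝ) (ht0 : 0 ≤ t) (ht1 : t < 1) :
    ∑ k ∈ S, Real.exp (-(((k:ℝ)+t)^2 / M)) ≤ 10 * Real.sqrt M := by
  rw [← Finset.sum_filter_add_sum_filter_not S (fun k => 0 ≤ k)]
  have hpos : ∑ k ∈ S.filter (fun k => 0 ≤ k), Real.exp (-(((k:ℝ)+t)^2 / M))
      ≤ 5 * Real.sqrt M := by
    have h1 : ∀ k ∈ S.filter (fun k => 0 ≤ k), Real.exp (-(((k:ℝ)+t)^2 / M))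
        ≤ Real.exp (-(((k.toNat:ℝ))^2 / M)) := by
      intro k hk
      have hk0 : (0:ℤ) ≤ k := (Finset.mem_filter.mp hk).2
      have hc : ((k.toNat:ℝ)) = (k:ℝ) := by exact_mod_cast Int.toNat_of_nonneg hk0
      have hk0' : (0:ℝ) ≤ (k:ℝ) := by exact_mod_cast hk0
      apply Real.exp_le_exp.mpr
      rw [neg_le_neg_iff, hc]
      apply div_le_div_of_nonneg_right ?_ (by linarith) |>.trans_eq rfl
      nlinarith
    refine (Finset.sum_le_sum h1).trans ?_
    have him : ∑ m ∈ (S.filter (fun k => 0 ≤ k)).image Int.toNat,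
        Real.exp (-((m:ℝ)^2 / M)) = ∑ k ∈ S.filter (fun k => 0 ≤ k),
        Real.exp (-(((k.toNat:ℝ))^2 / M)) := by
      apply Finset.sum_image
      intro x hx y hy hxy
      have hx0 : (0:ℤ) ≤ x := (Finset.mem_filter.mp hx).2
      have hy0 : (0:ℤ) ≤ y := (Finset.mem_filter.mp hy).2
      omega
    rw [← him]
    exact gaussNat M hM _
  have hneg : ∑ k ∈ S.filter (fun k => ¬ 0 ≤ k), Real.exp (-(((k:ℝ)+t)^2 / M))
      ≤ 5 * Real.sqrt M := by
    have h1 : ∀ k ∈ S.filter (fun k => ¬ 0 ≤ k), Real.exp (-(((k:ℝ)+t)^2 / M))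
        ≤ Real.exp (-((((-(k+1)).toNat:ℝ))^2 / M)) := by
      intro k hk
      have hk0 : k < 0 := by
        have := (Finset.mem_filter.mp hk).2; omega
      have hc : (((-(k+1)).toNat:ℝ)) = -((k:ℝ)+1) := by
        have hz : (((-(k+1)).toNat : ℤ)) = -(k+1) := Int.toNat_of_nonneg (by omega)
        calc (((-(k+1)).toNat:ℝ)) = ((((-(k+1)).toNat : ℤ)) : ℝ) := by push_cast; ring
          _ = -((k:ℝ)+1) := by rw [hz]; push_cast; ring
      have hk1 : (k:ℝ) + 1 ≤ 0 := by exact_mod_cast (by omega : k + 1 ≤ (0:ℤ))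
      apply Real.exp_le_exp.mpr
      rw [neg_le_neg_iff, hc]
      apply div_le_div_of_nonneg_right ?_ (by linarith) |>.trans_eq rfl
      nlinarith
    refine (Finset.sum_le_sum h1).trans ?_
    have him : ∑ m ∈ (S.filter (fun k => ¬ 0 ≤ k)).image (fun k : ℤ => (-(k+1)).toNat),
        Real.exp (-((m:ℝ)^2 / M)) = ∑ k ∈ S.filter (fun k => ¬ 0 ≤ k),
        Real.exp (-((((-(k+1)).toNat:ℝ))^2 / M)) := by
      apply Finset.sum_image
      intro x hx y hy hxy
      have hx0 : x < 0 := by have := (Finset.mem_filter.mp hx).2; omega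
      have hy0 : y < 0 := by have := (Finset.mem_filter.mp hy).2; omega
      simp only at hxy
      omega
    rw [← him]
    exact gaussNat M hM _
  linarith

lemma sumLogInt (M : ℝ) (hM : 1 ≤ M) (S : Finset ℤ) (t : ℝ) (ht0 : 0 ≤ t) (ht1 : t < 1)
    (hS : ∀ k ∈ S, 1/2 ≤ |(k:ℝ)+t|) :
    ∑ k ∈ S, Real.exp (-(((k:ℝ)+t)^2 / M)) / |(k:ℝ)+t| ≤ 12 + 2 * Real.log M := by
  set f : ℤ → ℝ := fun k => Real.exp (-(((k:ℝ)+t)^2 / M)) / |(k:ℝ)+t| with hf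
  have hfnonneg : ∀ k, 0 ≤ f k := by
    intro k; apply div_nonneg (Real.exp_pos _).le (abs_nonneg _)
  rw [← Finset.sum_filter_add_sum_filter_not S (fun k => 1 ≤ k)]
  rw [← Finset.sum_filter_add_sum_filter_not (S.filter (fun k => ¬ 1 ≤ k)) (fun k => k ≤ -2)]
  have hA : ∑ k ∈ S.filter (fun k => 1 ≤ k), f k ≤ 4 + Real.log M := by
    have h1 : ∀ k ∈ S.filter (fun k => 1 ≤ k), f k
        ≤ Real.exp (-(((k.toNat:ℝ))^2 / M)) / (k.toNat:ℝ) := by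
      intro k hk
      have hk1 : (1:ℤ) ≤ k := (Finset.mem_filter.mp hk).2
      have hc : ((k.toNat:ℝ)) = (k:ℝ) := by exact_mod_cast Int.toNat_of_nonneg (by omega)
      have hk1' : (1:ℝ) ≤ (k:ℝ) := by exact_mod_cast hk1
      have habs : |(k:ℝ)+t| = (k:ℝ)+t := abs_of_nonneg (by linarith)
      rw [hf]
      simp only
      rw [habs, hc]
      apply div_le_div₀ (Real.exp_pos _).le ?_ (by linarith) (by linarith)
      apply Real.exp_le_exp.mpr
      rw [neg_le_neg_iff]
      apply div_le_div_of_nonneg_right ?_ (by linarith) |>.trans_eq rfl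
      nlinarith
    refine (Finset.sum_le_sum h1).trans ?_
    have him : ∑ m ∈ (S.filter (fun k => 1 ≤ k)).image Int.toNat,
        Real.exp (-((m:ℝ)^2 / M)) / (m:ℝ) = ∑ k ∈ S.filter (fun k => 1 ≤ k),
        Real.exp (-(((k.toNat:ℝ))^2 / M)) / (k.toNat:ℝ) := by
      apply Finset.sum_image
      intro x hx y hy hxy
      have hx0 : (1:ℤ) ≤ x := (Finset.mem_filter.mp hx).2
      have hy0 : (1:ℤ) ≤ y := (Finset.mem_filter.mp hy).2
      omega
    rw [← him]
    apply logNat M hM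
    intro m hm
    obtain ⟨k, hk, rfl⟩ := Finset.mem_image.mp hm
    have : (1:ℤ) ≤ k := (Finset.mem_filter.mp hk).2
    omega
  have hB : ∑ k ∈ (S.filter (fun k => ¬ 1 ≤ k)).filter (fun k => k ≤ -2), f k
      ≤ 4 + Real.log M := by
    have h1 : ∀ k ∈ (S.filter (fun k => ¬ 1 ≤ k)).filter (fun k => k ≤ -2), f k
        ≤ Real.exp (-((((-(k+1)).toNat:ℝ))^2 / M)) / ((-(k+1)).toNat:ℝ) := by
      intro k hk
      have hk2 : k ≤ -2 := (Finset.mem_filter.mp hk).2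
      have hc : (((-(k+1)).toNat:ℝ)) = -((k:ℝ)+1) := by
        have hz : (((-(k+1)).toNat : ℤ)) = -(k+1) := Int.toNat_of_nonneg (by omega)
        calc (((-(k+1)).toNat:ℝ)) = ((((-(k+1)).toNat : ℤ)) : ℝ) := by push_cast; ring
          _ = -((k:ℝ)+1) := by rw [hz]; push_cast; ring
      have hk2' : (k:ℝ) ≤ -2 := by exact_mod_cast hk2
      have habs : |(k:ℝ)+t| = -((k:ℝ)+t) := abs_of_nonpos (by linarith)
      rw [hf]
      simp only
      rw [habs, hc]
      apply div_le_div₀ (Real.exp_pos _).le ?_ (by linarith) (by linarith)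
      apply Real.exp_le_exp.mpr
      rw [neg_le_neg_iff]
      apply div_le_div_of_nonneg_right ?_ (by linarith) |>.trans_eq rfl
      nlinarith
    refine (Finset.sum_le_sum h1).trans ?_
    have him : ∑ m ∈ ((S.filter (fun k => ¬ 1 ≤ k)).filter (fun k => k ≤ -2)).image
        (fun k : ℤ => (-(k+1)).toNat),
        Real.exp (-((m:ℝ)^2 / M)) / (m:ℝ)
        = ∑ k ∈ (S.filter (fun k => ¬ 1 ≤ k)).filter (fun k => k ≤ -2),
        Real.exp (-((((-(k+1)).toNat:ℝ))^2 / M)) / ((-(k+1)).toNat:ℝ) := by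
      apply Finset.sum_image
      intro x hx y hy hxy
      have hx0 : x ≤ -2 := (Finset.mem_filter.mp hx).2
      have hy0 : y ≤ -2 := (Finset.mem_filter.mp hy).2
      simp only at hxy
      omega
    rw [← him]
    apply logNat M hM
    intro m hm
    obtain ⟨k, hk, rfl⟩ := Finset.mem_image.mp hm
    have : k ≤ -2 := (Finset.mem_filter.mp hk).2
    omega
  have hC : ∑ k ∈ (S.filter (fun k => ¬ 1 ≤ k)).filter (fun k => ¬ k ≤ -2), f k ≤ 4 := by
    have h1 : ∀ k ∈ (S.filter (fun k => ¬ 1 ≤ k)).filter (fun k => ¬ k ≤ -2), f k ≤ 2 := by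
      intro k hk
      have hkS : k ∈ S := Finset.mem_filter.mp ((Finset.mem_filter.mp hk).1) |>.1
      have habs := hS k hkS
      have hexp : Real.exp (-(((k:ℝ)+t)^2 / M)) ≤ 1 := by
        apply Real.exp_le_one_iff.mpr
        have : (0:ℝ) ≤ ((k:ℝ)+t)^2 / M := by positivity
        linarith
      rw [hf]; simp only
      calc Real.exp (-(((k:ℝ)+t)^2 / M)) / |(k:ℝ)+t| ≤ 1 / |(k:ℝ)+t| := by
            apply div_le_div_of_nonneg_right hexp ?_ |>.trans_eq rfl
            linarith
        _ ≤ 2 := by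
            rw [div_le_iff₀ (by linarith)]
            linarith
    refine (Finset.sum_le_sum h1).trans ?_
    rw [Finset.sum_const]
    have hsub : (S.filter (fun k => ¬ 1 ≤ k)).filter (fun k => ¬ k ≤ -2)
        ⊆ ({-1, 0} : Finset ℤ) := by
      intro k hk
      have h1 := (Finset.mem_filter.mp hk).2
      have h2 := (Finset.mem_filter.mp ((Finset.mem_filter.mp hk).1)).2
      simp only [Finset.mem_insert, Finset.mem_singleton]
      omega
    have := Finset.card_le_card hsub
    simp only [nsmul_eq_mul]
    have hcard : (((S.filter (fun k => ¬ 1 ≤ k)).filter (fun k => ¬ k ≤ -2)).card : ℝ) ≤ 2 := by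
      have h2 : ({-1, 0} : Finset ℤ).card ≤ 2 := Finset.card_insert_le _ _ |>.trans (by simp)
      exact_mod_cast (this.trans h2)
    nlinarith
  have hlog : 0 ≤ Real.log M := Real.log_nonneg hM
  linarith

theorem error_term_quadratic_norm_sum :
    ∃ C : ℝ, 0 < C ∧ ∀ N : ℕ, 2 ≤ N → ∀ X : ℕ,
      (∑ a ∈ Finset.Icc (-(X : ℤ)) X, ∑ b ∈ Finset.Icc (-(X : ℤ)) X,
        if b ≠ 0 ∧ 2 * a + b ≠ 0 then
          Real.exp (-((a : ℝ)^2 + a * b + 2 * b^2) / N) *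
            (1 / |(a : ℝ) + b / 2| + 1 / |(b : ℝ)|)
        else 0) ≤ C * Real.sqrt N * Real.log N := by
  refine ⟨400, by norm_num, ?_⟩
  intro N hN X
  set M : ℝ := (N:ℝ) with hMdef
  have hM2 : (2:ℝ) ≤ M := by rw [hMdef]; exact_mod_cast hN
  have hM1 : (1:ℝ) ≤ M := by linarith
  have hM0 : (0:ℝ) < M := by linarith
  have hs1 : 1 ≤ Real.sqrt M := by
    rw [show (1:ℝ) = Real.sqrt 1 by simp]; exact Real.sqrt_le_sqrt hM1
  have hs0 : (0:ℝ) < Real.sqrt M := by linarith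
  have hlog2 : (0.6931471803:ℝ) < Real.log 2 := Real.log_two_gt_d9
  have hlogN : Real.log 2 ≤ Real.log M := Real.log_le_log (by norm_num) hM2
  set I : Finset ℤ := Finset.Icc (-(X : ℤ)) X with hI
  rw [Finset.sum_comm]
  -- per-b bound
  have key : ∀ b ∈ I, (∑ a ∈ I,
      if b ≠ 0 ∧ 2 * a + b ≠ 0 then
        Real.exp (-((a : ℝ)^2 + a * b + 2 * b^2) / M) *
          (1 / |(a : ℝ) + b / 2| + 1 / |(b : ℝ)|)
      else 0) ≤
      (if b ≠ 0 then Real.exp (-((b:ℝ)^2 / M)) * (12 + 2 * Real.log M)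
        + Real.exp (-((b:ℝ)^2 / M)) / |(b:ℝ)| * (10 * Real.sqrt M) else 0) := by
    intro b _
    by_cases hb : b = 0
    · simp [hb]
    rw [if_pos hb]
    have hb' : (b:ℝ) ≠ 0 := by exact_mod_cast hb
    -- reindexing setup
    set r : ℤ := b % 2 with hrdef
    set q : ℤ := b / 2 with hqdef
    have hbqr : 2 * q + r = b := Int.mul_ediv_add_emod b 2
    have hr01 : r = 0 ∨ r = 1 := by omega
    set t : ℝ := (r:ℝ)/2 with htdef
    have ht0 : 0 ≤ t := by
      rcases hr01 with h | h <;> simp [htdef, h] <;> norm_num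
    have ht1 : t < 1 := by
      rcases hr01 with h | h <;> simp [htdef, h] <;> norm_num
    have hshift : ∀ a : ℤ, (a:ℝ) + (b:ℝ)/2 = ((a + q : ℤ):ℝ) + t := by
      intro a
      rw [htdef]
      have : (b:ℝ) = 2*(q:ℝ) + (r:ℝ) := by exact_mod_cast hbqr.symm
      rw [this]; push_cast; ring
    -- termwise splitting
    have hsplit : ∀ a ∈ I,
        (if b ≠ 0 ∧ 2 * a + b ≠ 0 then
          Real.exp (-((a : ℝ)^2 + a * b + 2 * b^2) / M) *
            (1 / |(a : ℝ) + b / 2| + 1 / |(b : ℝ)|)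
        else 0) ≤
        Real.exp (-((b:ℝ)^2 / M)) *
          (if 2 * a + b ≠ 0 then
            Real.exp (-((((a:ℝ) + (b:ℝ)/2))^2 / M)) / |(a:ℝ) + (b:ℝ)/2| else 0)
        + Real.exp (-((b:ℝ)^2 / M)) / |(b:ℝ)| *
            Real.exp (-((((a:ℝ) + (b:ℝ)/2))^2 / M)) := by
      intro a _
      by_cases ha : 2 * a + b ≠ 0
      · rw [if_pos ⟨hb, ha⟩, if_pos ha]
        have hE : Real.exp (-((a : ℝ)^2 + a * b + 2 * b^2) / M) ≤
            Real.exp (-((((a:ℝ) + (b:ℝ)/2))^2 / M)) * Real.exp (-((b:ℝ)^2 / M)) := by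
          rw [← Real.exp_add]
          apply Real.exp_le_exp.mpr
          rw [neg_div, ← neg_add, neg_le_neg_iff, ← add_div]
          apply div_le_div_of_nonneg_right ?_ (by linarith) |>.trans_eq rfl
          nlinarith [sq_nonneg (b:ℝ)]
        have h2 : (0:ℝ) ≤ 1 / |(a : ℝ) + b / 2| + 1 / |(b : ℝ)| := by positivity
        calc Real.exp (-((a : ℝ)^2 + a * b + 2 * b^2) / M) *
              (1 / |(a : ℝ) + b / 2| + 1 / |(b : ℝ)|)
            ≤ (Real.exp (-((((a:ℝ) + (b:ℝ)/2))^2 / M)) * Real.exp (-((b:ℝ)^2 / M))) *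
              (1 / |(a : ℝ) + b / 2| + 1 / |(b : ℝ)|) := by
              exact mul_le_mul_of_nonneg_right hE h2
          _ = Real.exp (-((b:ℝ)^2 / M)) *
                (Real.exp (-((((a:ℝ) + (b:ℝ)/2))^2 / M)) / |(a:ℝ) + (b:ℝ)/2|)
              + Real.exp (-((b:ℝ)^2 / M)) / |(b:ℝ)| *
                Real.exp (-((((a:ℝ) + (b:ℝ)/2))^2 / M)) := by
              field_simp
      · rw [if_neg (by tauto)]
        have h1 : (0:ℝ) ≤ Real.exp (-((b:ℝ)^2 / M)) *
            (if 2 * a + b ≠ 0 then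
              Real.exp (-((((a:ℝ) + (b:ℝ)/2))^2 / M)) / |(a:ℝ) + (b:ℝ)/2| else 0) := by
          apply mul_nonneg (Real.exp_pos _).le
          split <;> positivity
        have h2 : (0:ℝ) ≤ Real.exp (-((b:ℝ)^2 / M)) / |(b:ℝ)| *
            Real.exp (-((((a:ℝ) + (b:ℝ)/2))^2 / M)) := by positivity
        linarith
    refine (Finset.sum_le_sum hsplit).trans ?_
    rw [Finset.sum_add_distrib, ← Finset.mul_sum, ← Finset.mul_sum]
    have hS1 : ∑ a ∈ I, (if 2 * a + b ≠ 0 then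
        Real.exp (-((((a:ℝ) + (b:ℝ)/2))^2 / M)) / |(a:ℝ) + (b:ℝ)/2| else 0)
        ≤ 12 + 2 * Real.log M := by
      rw [← Finset.sum_filter]
      have heq : ∑ a ∈ I.filter (fun a => 2 * a + b ≠ 0),
          Real.exp (-((((a:ℝ) + (b:ℝ)/2))^2 / M)) / |(a:ℝ) + (b:ℝ)/2|
          = ∑ k ∈ (I.filter (fun a => 2 * a + b ≠ 0)).image (fun a => a + q),
          Real.exp (-((((k:ℝ) + t))^2 / M)) / |(k:ℝ) + t| := by
        rw [Finset.sum_image (by intro x _ y _ h; exact add_right_cancel h)]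
        refine Finset.sum_congr rfl fun a _ => ?_
        rw [← hshift a]
      rw [heq]
      apply sumLogInt M hM1 _ t ht0 ht1
      intro k hk
      obtain ⟨a, ha, rfl⟩ := Finset.mem_image.mp hk
      have ha' : 2 * a + b ≠ 0 := (Finset.mem_filter.mp ha).2
      have : (((a + q : ℤ)):ℝ) + t = (a:ℝ) + (b:ℝ)/2 := (hshift a).symm
      rw [this]
      have h1 : (1:ℝ) ≤ |((2*a+b : ℤ) : ℝ)| := by
        rw [← Int.cast_abs]
        exact_mod_cast Int.one_le_abs (by omega)
      have h2 : |(a:ℝ) + (b:ℝ)/2| = |((2*a+b : ℤ) : ℝ)| / 2 := by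
        have hh : ((2*a+b : ℤ) : ℝ)/2 = (a:ℝ) + (b:ℝ)/2 := by push_cast; ring
        rw [← hh, abs_div, abs_of_pos (show (0:ℝ) < 2 by norm_num)]
      rw [h2]
      linarith
    have hS2 : ∑ a ∈ I, Real.exp (-((((a:ℝ) + (b:ℝ)/2))^2 / M)) ≤ 10 * Real.sqrt M := by
      have heq : ∑ a ∈ I, Real.exp (-((((a:ℝ) + (b:ℝ)/2))^2 / M))
          = ∑ k ∈ I.image (fun a => a + q), Real.exp (-((((k:ℝ) + t))^2 / M)) := by
        rw [Finset.sum_image (by intro x _ y _ h; exact add_right_cancel h)]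
        refine Finset.sum_congr rfl fun a _ => ?_
        rw [← hshift a]
      rw [heq]
      exact sumGaussInt M hM1 _ t ht0 ht1
    have he1 : (0:ℝ) ≤ Real.exp (-((b:ℝ)^2 / M)) := (Real.exp_pos _).le
    have he2 : (0:ℝ) ≤ Real.exp (-((b:ℝ)^2 / M)) / |(b:ℝ)| := by positivity
    have := mul_le_mul_of_nonneg_left hS1 he1
    have := mul_le_mul_of_nonneg_left hS2 he2
    linarith
  refine (Finset.sum_le_sum key).trans ?_
  -- outer sums
  rw [← Finset.sum_filter]
  rw [Finset.sum_add_distrib, ← Finset.sum_mul, ← Finset.sum_mul]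
  have hO1 : ∑ b ∈ I.filter (fun b => b ≠ 0), Real.exp (-((b:ℝ)^2 / M)) ≤ 10 * Real.sqrt M := by
    have h := sumGaussInt M hM1 (I.filter (fun b => b ≠ 0)) 0 le_rfl one_pos
    simpa using h
  have hO2 : ∑ b ∈ I.filter (fun b => b ≠ 0), Real.exp (-((b:ℝ)^2 / M)) / |(b:ℝ)|
      ≤ 12 + 2 * Real.log M := by
    have h := sumLogInt M hM1 (I.filter (fun b => b ≠ 0)) 0 le_rfl one_pos ?_
    · simpa using h
    · intro k hk
      have hk0 : k ≠ 0 := (Finset.mem_filter.mp hk).2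
      have : (1:ℝ) ≤ |(k:ℝ)| := by
        rw [← Int.cast_abs]
        exact_mod_cast Int.one_le_abs hk0
      simpa using by linarith
  have hL : (0:ℝ) ≤ 12 + 2 * Real.log M := by nlinarith
  have hbound1 := mul_le_mul_of_nonneg_right hO1 hL
  have hbound2 := mul_le_mul_of_nonneg_right hO2 (by positivity : (0:ℝ) ≤ 10 * Real.sqrt M)
  have hfinal : 10 * Real.sqrt M * (12 + 2 * Real.log M)
      + (12 + 2 * Real.log M) * (10 * Real.sqrt M) ≤ 400 * Real.sqrt M * Real.log M := by
    nlinarith [hs1, hlogN, hlog2]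
  linarith
end

section
/- Let a,b,c,d be integers with gcd(a,b) = 1 = gcd(c,d), η = (1+√(-7))/2, and suppose gcd(N(a+bη), N(c+dη)) = 1 where N(x+yη) = x²+xy+2y². If the product (a+bη)(c+dη) is real or purely imaginary, then each of a+bη and c+dη is real or purely imaginary (equivalently b = 0 or 2a+b = 0, and d = 0 or 2c+d = 0). -/
/-!
With `η = (1 + √-7)/2`, put `α = a + bη`, `β = c + dη` and `αβ = A + Bη`. Being real or purely
imaginary means `B = tA` with `t = 0` or `t = -2`, i.e. `αβ = A(1 + tη)`. Multiplying by `β̄` gives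
`N(β) α = A(1 + tη)β̄`, so `A` divides both coordinates of `N(β) α`; as `a, b` are coprime,
`A ∣ N(β)`, and symmetrically `A ∣ N(α)`. Coprimality of the norms forces `A = ±1`, hence
`N(α) N(β) = N(1 + tη) ∈ {1, 7}`. Finally `4 N(x + yη) = (2x + y)² + 7y²`, so norm `1` forces
`y = 0` and norm `7` forces `2x + y = 0`.
-/

lemma Int.dvd_of_dvd_mul_of_gcd_eq_one {a b k n : ℤ} (hab : Int.gcd a b = 1)
    (ha : k ∣ a * n) (hb : k ∣ b * n) : k ∣ n := by
  have hk : k ∣ ((a * n).gcd (b * n) : ℤ) := Int.dvd_coe_gcd ha hb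
  rwa [Int.gcd_mul_right, hab, one_mul, Int.natCast_natAbs, dvd_abs] at hk

lemma real_part_dvd_norm_right {a b c d t : ℤ} (hab : Int.gcd a b = 1)
    (h : a * d + b * c + b * d = t * (a * c - 2 * b * d)) :
    a * c - 2 * b * d ∣ c ^ 2 + c * d + 2 * d ^ 2 := by
  -- `N(β) α = A (1 + tη) β̄` and `(1 + tη)((c + d) - dη) = (c + d + 2td) + (tc - d)η`
  refine Int.dvd_of_dvd_mul_of_gcd_eq_one hab ⟨c + d + 2 * t * d, ?_⟩ ⟨t * c - d, ?_⟩
  · linear_combination (2 * d) * h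
  · linear_combination c * h

lemma norm_mul_eq_of_imag_eq_mul_real {a b c d t : ℤ}
    (h : a * d + b * c + b * d = t * (a * c - 2 * b * d)) :
    (a ^ 2 + a * b + 2 * b ^ 2) * (c ^ 2 + c * d + 2 * d ^ 2) =
      (1 + t + 2 * t ^ 2) * (a * c - 2 * b * d) ^ 2 := by
  linear_combination
    (a * c - 2 * b * d + 2 * (a * d + b * c + b * d) + 2 * t * (a * c - 2 * b * d)) * h

lemma eq_zero_or_of_norm_dvd_seven {x y : ℤ} (h : x ^ 2 + x * y + 2 * y ^ 2 ∣ 7) :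
    y = 0 ∨ 2 * x + y = 0 := by
  have h4 : 4 * (x ^ 2 + x * y + 2 * y ^ 2) = (2 * x + y) ^ 2 + 7 * y ^ 2 := by ring
  set n := x ^ 2 + x * y + 2 * y ^ 2
  have hpos : 0 < n := by
    refine lt_of_le_of_ne (by nlinarith [sq_nonneg (2 * x + y)]) fun h0 => ?_
    rw [← h0, zero_dvd_iff] at h
    norm_num at h
  have hle : n ≤ 7 := Int.le_of_dvd (by norm_num) h
  interval_cases n <;> norm_num at h
  · left; nlinarith [sq_nonneg (2 * x + y), sq_nonneg y]
  · right
    obtain ⟨u, hu⟩ : (7 : ℤ) ∣ 2 * x + y :=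
      Int.Prime.dvd_pow' (p := 7) (k := 2) (by norm_num) ⟨4 - y ^ 2, by push_cast; linarith⟩
    rw [hu] at h4
    have hu0 : u ^ 2 = 0 := by nlinarith [sq_nonneg y]
    rw [hu, pow_eq_zero_iff two_ne_zero |>.mp hu0, mul_zero]

theorem product_real_or_imaginary (a b c d : ℤ)
    (hab : Int.gcd a b = 1) (hcd : Int.gcd c d = 1)
    (hnorm : Int.gcd (a^2 + a * b + 2 * b^2) (c^2 + c * d + 2 * d^2) = 1)
    (hprod : (a * d + b * c + b * d = 0) ∨
      (2 * (a * c - 2 * b * d) + (a * d + b * c + b * d) = 0)) :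
    (b = 0 ∨ 2 * a + b = 0) ∧ (d = 0 ∨ 2 * c + d = 0) := by
  obtain ⟨t, ht, hB⟩ : ∃ t : ℤ, 1 + t + 2 * t ^ 2 ∣ 7 ∧
      a * d + b * c + b * d = t * (a * c - 2 * b * d) := by
    rcases hprod with h | h
    · exact ⟨0, by norm_num, by linarith⟩
    · exact ⟨-2, by norm_num, by linarith⟩
  have hA : IsUnit (a * c - 2 * b * d) := by
    have hN₁ : a * c - 2 * b * d ∣ a ^ 2 + a * b + 2 * b ^ 2 := by
      have := real_part_dvd_norm_right (c := a) (d := b) (t := t) hcd (by linear_combination hB)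
      rwa [show c * a - 2 * d * b = a * c - 2 * b * d by ring] at this
    have := Int.dvd_coe_gcd hN₁ (real_part_dvd_norm_right hab hB)
    rw [hnorm, Nat.cast_one] at this
    exact isUnit_of_dvd_one this
  have h7 : (a ^ 2 + a * b + 2 * b ^ 2) * (c ^ 2 + c * d + 2 * d ^ 2) ∣ 7 := by
    rwa [norm_mul_eq_of_imag_eq_mul_real hB, Int.isUnit_sq hA, mul_one]
  exact ⟨eq_zero_or_of_norm_dvd_seven (dvd_of_mul_right_dvd h7),
    eq_zero_or_of_norm_dvd_seven (dvd_of_mul_left_dvd h7)⟩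
end

section
/- If a+bη, c+dη are integers of Q(√(-7)) (η=(1+√(-7))/2) and (a+bη)(c+dη) = A + Bη with B = 0, gcd(2a+b, b) = g, and gcd(N(a+bη), N(c+dη)) = 1, then b = d = 0. (Here N(x+yη)=x²+xy+2y².) -/
/-!
With `a' = 2a + b` and `c' = 2c + d`, the condition `B = 0` says `a' d + c' b = 0`, i.e. the vectors
`(a', b)` and `(-c', d)` are proportional. Hence both are integer multiples `g • (A, B')` and
`t • (A, B')` of one primitive vector, and since `4 N(x + yη) = (2x + y)² + 7y²`, both `4 N(a + bη)`
and `4 N(c + dη)` are divisible by `A² + 7B'²`. Coprimality of the norms forces `A² + 7B'² ∣ 4`,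
so `B' = 0`, and then `b = g B' = 0` and `d = t B' = 0`.
-/

namespace Int

theorem exists_eq_mul_of_mul_eq_mul {x y z w : ℤ} (h : x * w = y * z) :
    ∃ g t A B : ℤ, x = g * A ∧ z = g * B ∧ y = t * A ∧ w = t * B := by
  rcases (Int.gcd x z).eq_zero_or_pos with h0 | hpos
  · obtain ⟨rfl, rfl⟩ := Int.gcd_eq_zero_iff.mp h0
    exact ⟨0, 1, y, w, by ring, by ring, by ring, by ring⟩
  obtain ⟨A, B, hAB, hx, hz⟩ := Int.exists_gcd_one hpos
  obtain ⟨u, v, huv⟩ := Int.isCoprime_iff_gcd_eq_one.mpr hAB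
  have hcancel : A * w = y * B := by
    have hg : (Int.gcd x z : ℤ) ≠ 0 := by exact_mod_cast hpos.ne'
    refine mul_left_cancel₀ hg ?_
    linear_combination h - w * hx + y * hz
  -- `t` is the coordinate of `(y, w)` along `(A, B)`, read off through a Bézout relation `uA + vB = 1`.
  refine ⟨Int.gcd x z, u * y + v * w, A, B, hx.trans (mul_comm _ _), hz.trans (mul_comm _ _), ?_, ?_⟩
  · linear_combination -y * huv - v * hcancel
  · linear_combination -w * huv + u * hcancel

theorem eq_zero_of_sq_add_seven_mul_sq_dvd_four {A B : ℤ} (h : A ^ 2 + 7 * B ^ 2 ∣ 4) : B = 0 := by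
  have hle := Int.le_of_dvd four_pos h
  have hB2 : B ^ 2 ≤ 0 := by nlinarith [sq_nonneg A]
  exact pow_eq_zero_iff two_ne_zero |>.mp (le_antisymm hB2 (sq_nonneg B))

end Int

theorem product_real_coprime_norms (a b c d : ℤ)
    (hB : a * d + b * c + b * d = 0)
    (hnorm : Int.gcd (a^2 + a * b + 2 * b^2) (c^2 + c * d + 2 * d^2) = 1) :
    b = 0 ∧ d = 0 := by
  obtain ⟨g, t, A, B, ha, hb, hc, hd⟩ :=
    Int.exists_eq_mul_of_mul_eq_mul (x := 2 * a + b) (y := -(2 * c + d)) (z := b) (w := d)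
      (by linear_combination 2 * hB)
  have hdvd₁ : A ^ 2 + 7 * B ^ 2 ∣ 4 * (a ^ 2 + a * b + 2 * b ^ 2) :=
    ⟨g ^ 2, by linear_combination (2 * a + b + g * A) * ha + 7 * (b + g * B) * hb⟩
  have hdvd₂ : A ^ 2 + 7 * B ^ 2 ∣ 4 * (c ^ 2 + c * d + 2 * d ^ 2) :=
    ⟨t ^ 2, by linear_combination (t * A - (2 * c + d)) * hc + 7 * (d + t * B) * hd⟩
  have hdvd : A ^ 2 + 7 * B ^ 2 ∣ 4 := by
    simpa [Int.gcd_mul_left, hnorm] using Int.dvd_coe_gcd hdvd₁ hdvd₂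
  have hB0 := Int.eq_zero_of_sq_add_seven_mul_sq_dvd_four hdvd
  exact ⟨by rw [hb, hB0, mul_zero], by rw [hd, hB0, mul_zero]⟩
end

section
/- Define δ(m) = lim_{N→∞} (1/N) ∑_{n=1}^N χ^{(4n-3)}(m)/m^{2n-3/2}, where χ^{(k)}(m) = (1/2)∑_{a²+ab+2b²=m} ε_{a,b}(a+bη)^k with ε_{a,b} = ((a³-2a²b-ab²+b³)/7) the Legendre symbol mod 7 and η=(1+√(-7))/2. Then δ(m) = 0 unless m is a perfect square, and δ(m²') for m a square equals the Legendre symbol (√m / 7); in particular for a prime p ≠ 7, δ(p²) = (p/7) and δ(p^{2k}) = (p/7)^k. -/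
open Complex Filter

instance : Fact (Nat.Prime 7) := ⟨by norm_num⟩

/-- `χ^{(k)}(m) = (1/2) ∑_{a²+ab+2b²=m} ε_{a,b} (a+bη)^k` where
`ε_{a,b}` is the Legendre symbol of `a³-2a²b-ab²+b³` mod 7. -/
noncomputable def chi7 (k : ℕ) (m : ℕ) : ℂ :=
  (1 / 2) * ∑ p ∈ (Finset.Icc (-(m : ℤ)) m ×ˢ Finset.Icc (-(m : ℤ)) m).filter
      (fun p => p.1 ^ 2 + p.1 * p.2 + 2 * p.2 ^ 2 = (m : ℤ)),
    (legendreSym 7 (p.1 ^ 3 - 2 * p.1 ^ 2 * p.2 - p.1 * p.2 ^ 2 + p.2 ^ 3) : ℂ) *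
      ((p.1 : ℂ) + (p.2 : ℂ) * eta7) ^ k

/-- The average `δ(m) = lim_N (1/N) ∑_{n≤N} χ^{(4n-3)}(m)/m^{2n-3/2}`. -/
noncomputable def deltaAvg (m : ℕ) : ℕ → ℂ := fun N =>
  (N : ℂ)⁻¹ * ∑ n ∈ Finset.Icc 1 N, chi7 (4 * n - 3) m / (m : ℂ) ^ ((2 * (n : ℂ)) - 3 / 2)

/-! With `u = (a + bη)/√m` on the unit circle, the `n`-th term of the average is
`(1/2) ∑ ε_{a,b} u (u⁴)^(n-1)`, and the Cesàro mean of `(u⁴)^(n-1)` tends to `1` if `u⁴ = 1` and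
to `0` otherwise. Since `Im (a + bη)⁴ = (√7/4) (2a+b) b ((2a+b)² - 7b²)` and `7` is not a square,
`u⁴ = 1` forces `b = 0` or `2a + b = 0`; on the second line the cubic in `ε` is `-7a³`, so `ε = 0`.
Only the points `(±t, 0)` with `t² = m` survive, and each contributes `(t/7)/2`. -/

open scoped Topology

theorem tendsto_inv_mul_geom_sum {𝕜 : Type*} [RCLike 𝕜] {w : 𝕜} (hw : ‖w‖ ≤ 1) :
    Tendsto (fun N : ℕ => (N : 𝕜)⁻¹ * ∑ n ∈ Finset.range N, w ^ n) atTop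
      (𝓝 (if w = 1 then 1 else 0)) := by
  split_ifs with hw1
  · subst hw1
    refine tendsto_const_nhds.congr' ?_
    filter_upwards [eventually_ne_atTop 0] with N hN
    simp [inv_mul_cancel₀ (Nat.cast_ne_zero.mpr hN : (N : 𝕜) ≠ 0)]
  · have hbound (N : ℕ) :
        ‖(N : 𝕜)⁻¹ * ∑ n ∈ Finset.range N, w ^ n‖ ≤ 2 / ‖w - 1‖ * (N : ℝ)⁻¹ := by
      have hwN : ‖w ^ N - 1‖ ≤ 2 :=
        calc ‖w ^ N - 1‖ ≤ ‖w‖ ^ N + 1 := by simpa using norm_sub_le (w ^ N) 1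
          _ ≤ 2 := by linarith [pow_le_one₀ (n := N) (norm_nonneg w) hw]
      rw [geom_sum_eq hw1, norm_mul, norm_inv, RCLike.norm_natCast, norm_div, mul_comm]
      gcongr
    refine squeeze_zero_norm hbound ?_
    simpa using (tendsto_inv_atTop_nhds_zero_nat (𝕜 := ℝ)).const_mul (2 / ‖w - 1‖)

theorem Complex.ofReal_cpow_natCast_div_two {x : ℝ} (hx : 0 ≤ x) (k : ℕ) :
    (x : ℂ) ^ ((k : ℂ) / 2) = (√x : ℂ) ^ k := by
  rw [← Complex.ofReal_pow, Real.sqrt_eq_rpow, ← Real.rpow_mul_natCast hx,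
    show ((k : ℂ) / 2) = ((1 / 2 * k : ℝ) : ℂ) by push_cast; ring, Complex.ofReal_cpow hx]

theorem Int.eq_zero_of_sq_eq_mul_sq {d : ℕ} (hd : ¬IsSquare d) {x y : ℤ}
    (h : x ^ 2 = d * y ^ 2) : y = 0 := by
  by_contra hy
  refine hd (Rat.isSquare_natCast_iff.mp ⟨x / y, ?_⟩)
  field_simp
  exact_mod_cast h.symm

theorem legendreSym_pow (p : ℕ) [Fact p.Prime] (a : ℤ) (k : ℕ) :
    legendreSym p (a ^ k) = legendreSym p a ^ k :=
  map_pow (legendreSym.hom p) a k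

theorem legendreSym_pow_three (p : ℕ) [Fact p.Prime] (a : ℤ) :
    legendreSym p (a ^ 3) = legendreSym p a := by
  rw [legendreSym_pow]
  by_cases ha : (a : ZMod p) = 0
  · simp [(legendreSym.eq_zero_iff p a).mpr ha]
  · rw [pow_succ, legendreSym.sq_one p ha, one_mul]

noncomputable def normReps (m : ℕ) : Finset (ℤ × ℤ) :=
  (Finset.Icc (-(m : ℤ)) m ×ˢ Finset.Icc (-(m : ℤ)) m).filter
    (fun p => p.1 ^ 2 + p.1 * p.2 + 2 * p.2 ^ 2 = (m : ℤ))

noncomputable def toEta (p : ℤ × ℤ) : ℂ := p.1 + p.2 * eta7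

def eps7 (p : ℤ × ℤ) : ℤ :=
  legendreSym 7 (p.1 ^ 3 - 2 * p.1 ^ 2 * p.2 - p.1 * p.2 ^ 2 + p.2 ^ 3)

noncomputable def unitOf (m : ℕ) (p : ℤ × ℤ) : ℂ := toEta p / (√m : ℂ)

theorem chi7_eq_sum_normReps (k m : ℕ) :
    chi7 k m = 1 / 2 * ∑ p ∈ normReps m, eps7 p * toEta p ^ k := rfl

theorem mem_normReps {m : ℕ} {p : ℤ × ℤ} (hp : p ∈ normReps m) :
    p.1 ^ 2 + p.1 * p.2 + 2 * p.2 ^ 2 = m :=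
  (Finset.mem_filter.mp hp).2

@[simp] theorem toEta_re (p : ℤ × ℤ) : (toEta p).re = p.1 + p.2 / 2 := by
  simp [toEta, eta7]
  ring

@[simp] theorem toEta_im (p : ℤ × ℤ) : (toEta p).im = p.2 * √7 / 2 := by
  simp [toEta, eta7]
  ring

theorem normSq_toEta (p : ℤ × ℤ) :
    Complex.normSq (toEta p) = ((p.1 ^ 2 + p.1 * p.2 + 2 * p.2 ^ 2 : ℤ) : ℝ) := by
  have h7 : √7 ^ 2 = 7 := Real.sq_sqrt (by norm_num)
  rw [Complex.normSq_apply, toEta_re, toEta_im]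
  push_cast
  linear_combination (p.2 : ℝ) ^ 2 / 4 * h7

theorem norm_toEta {m : ℕ} {p : ℤ × ℤ} (hp : p ∈ normReps m) : ‖toEta p‖ = √m := by
  rw [Complex.norm_def, normSq_toEta, mem_normReps hp, Int.cast_natCast]

theorem norm_unitOf_le_one {m : ℕ} {p : ℤ × ℤ} (hp : p ∈ normReps m) : ‖unitOf m p‖ ≤ 1 := by
  rw [unitOf, norm_div, norm_toEta hp, Complex.norm_real, Real.norm_of_nonneg (Real.sqrt_nonneg _)]
  exact div_self_le_one _

theorem im_toEta_pow_four (p : ℤ × ℤ) :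
    (toEta p ^ 4).im = √7 / 4 * ((2 * p.1 + p.2) * p.2 * ((2 * p.1 + p.2) ^ 2 - 7 * p.2 ^ 2)) := by
  have h7 : √7 ^ 2 = 7 := Real.sq_sqrt (by norm_num)
  simp only [pow_succ, pow_zero, one_mul, Complex.mul_im, Complex.mul_re, toEta_re, toEta_im]
  linear_combination (-(p.2 : ℝ) ^ 3 * √7 * (2 * p.1 + p.2) / 4) * h7

theorem deltaAvg_eq_sum (m N : ℕ) :
    deltaAvg m N = ∑ p ∈ normReps m,
      eps7 p * unitOf m p / 2 * ((N : ℂ)⁻¹ * ∑ n ∈ Finset.range N, (unitOf m p ^ 4) ^ n) := by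
  have hterm (n : ℕ) : chi7 (4 * (1 + n) - 3) m / (m : ℂ) ^ (2 * ((1 + n : ℕ) : ℂ) - 3 / 2) =
      ∑ p ∈ normReps m, eps7 p * unitOf m p / 2 * (unitOf m p ^ 4) ^ n := by
    rw [show 4 * (1 + n) - 3 = 4 * n + 1 by omega,
      show 2 * ((1 + n : ℕ) : ℂ) - 3 / 2 = ((4 * n + 1 : ℕ) : ℂ) / 2 by push_cast; ring,
      ← Complex.ofReal_natCast, Complex.ofReal_cpow_natCast_div_two (Nat.cast_nonneg m),
      chi7_eq_sum_normReps, Finset.mul_sum, Finset.sum_div]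
    refine Finset.sum_congr rfl fun p _ => ?_
    rw [unitOf]
    ring
  rw [deltaAvg, ← Finset.Ico_add_one_right_eq_Icc, Finset.sum_Ico_eq_sum_range,
    Nat.add_sub_cancel]
  simp_rw [hterm]
  rw [Finset.sum_comm, Finset.mul_sum]
  refine Finset.sum_congr rfl fun p _ => ?_
  rw [Finset.mul_sum, Finset.mul_sum, Finset.mul_sum]
  refine Finset.sum_congr rfl fun n _ => ?_
  ring

noncomputable def deltaLimit (m : ℕ) : ℂ :=
  ∑ p ∈ normReps m with unitOf m p ^ 4 = 1, eps7 p * unitOf m p / 2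

theorem tendsto_deltaAvg (m : ℕ) : Tendsto (deltaAvg m) atTop (𝓝 (deltaLimit m)) := by
  rw [funext (deltaAvg_eq_sum m), deltaLimit, Finset.sum_filter]
  refine tendsto_finsetSum _ fun p hp => ?_
  have hu : ‖unitOf m p ^ 4‖ ≤ 1 := by
    rw [norm_pow]
    exact pow_le_one₀ (norm_nonneg _) (norm_unitOf_le_one hp)
  simpa [mul_ite] using (tendsto_inv_mul_geom_sum hu).const_mul (eps7 p * unitOf m p / 2)

theorem snd_eq_zero_or_of_unitOf_pow_four {m : ℕ} {p : ℤ × ℤ} (h : unitOf m p ^ 4 = 1) :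
    p.2 = 0 ∨ 2 * p.1 + p.2 = 0 := by
  have hs : (√m : ℂ) ^ 4 ≠ 0 := by
    rintro hs
    simp [unitOf, div_pow, hs] at h
  have him := im_toEta_pow_four p
  rw [unitOf, div_pow, div_eq_one_iff_eq hs, ← Complex.ofReal_pow] at h
  rw [h, Complex.ofReal_im, zero_eq_mul] at him
  have hprod : (2 * p.1 + p.2) * p.2 * ((2 * p.1 + p.2) ^ 2 - 7 * p.2 ^ 2) = 0 := by
    exact_mod_cast him.resolve_left (by positivity)
  rcases mul_eq_zero.mp hprod with hprod | hdiff
  · rcases mul_eq_zero.mp hprod with hdiag | hb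
    · exact Or.inr hdiag
    · exact Or.inl hb
  · refine Or.inl (Int.eq_zero_of_sq_eq_mul_sq (d := 7) (x := 2 * p.1 + p.2) (Irreducible.not_isSquare (by norm_num : Nat.Prime 7)) ?_)
    exact_mod_cast sub_eq_zero.mp hdiff

theorem unitOf_pow_four_of_snd_eq_zero {m : ℕ} (hm : 0 < m) {p : ℤ × ℤ} (hp : p ∈ normReps m)
    (hb : p.2 = 0) : unitOf m p ^ 4 = 1 := by
  have ha : (p.1 : ℂ) ^ 2 = m := by
    have := mem_normReps hp
    rw [hb] at this
    exact_mod_cast (by simpa using this)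
  rw [show 4 = 2 * 2 by rfl, pow_mul, unitOf, div_pow, toEta, hb, ← Complex.ofReal_pow,
    Real.sq_sqrt (Nat.cast_nonneg m)]
  simp [ha, (Nat.cast_ne_zero.mpr hm.ne' : (m : ℂ) ≠ 0)]

theorem eps7_eq_zero_of_two_mul_add_eq_zero {p : ℤ × ℤ} (h : 2 * p.1 + p.2 = 0) : eps7 p = 0 := by
  have hcubic : p.1 ^ 3 - 2 * p.1 ^ 2 * p.2 - p.1 * p.2 ^ 2 + p.2 ^ 3 = 7 * -p.1 ^ 3 := by
    rw [show p.2 = -(2 * p.1) by omega]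
    ring
  rw [eps7, legendreSym.eq_zero_iff, hcubic, Int.cast_mul, show ((7 : ℤ) : ZMod 7) = 0 by decide,
    zero_mul]

theorem eps7_mk_zero (a : ℤ) : eps7 (a, 0) = legendreSym 7 a := by
  simp [eps7, legendreSym_pow_three]

theorem deltaLimit_eq_sum_snd_eq_zero {m : ℕ} (hm : 0 < m) :
    deltaLimit m = ∑ p ∈ normReps m with p.2 = 0, eps7 p * unitOf m p / 2 := by
  rw [deltaLimit, Finset.sum_filter, Finset.sum_filter]
  refine Finset.sum_congr rfl fun p hp => ?_
  by_cases hb : p.2 = 0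
  · rw [if_pos (unitOf_pow_four_of_snd_eq_zero hm hp hb), if_pos hb]
  · rw [if_neg hb]
    split_ifs with h4
    · rw [eps7_eq_zero_of_two_mul_add_eq_zero ((snd_eq_zero_or_of_unitOf_pow_four h4).resolve_left hb)]
      simp
    · rfl

theorem filter_normReps_snd_eq_zero_eq_empty {m : ℕ} (h : ¬IsSquare m) :
    {p ∈ normReps m | p.2 = 0} = ∅ := by
  refine Finset.filter_eq_empty_iff.mpr fun p hp hb => h (Int.isSquare_natCast_iff.mp ⟨p.1, ?_⟩)
  have := mem_normReps hp
  rw [hb] at this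
  simpa [sq] using this.symm

theorem filter_normReps_sq_snd_eq_zero (t : ℕ) :
    {p ∈ normReps (t ^ 2) | p.2 = 0} = {((t : ℤ), 0), (-(t : ℤ), 0)} := by
  ext ⟨a, b⟩
  simp only [normReps, Finset.mem_filter, Finset.mem_product, Finset.mem_Icc, Finset.mem_insert,
    Finset.mem_singleton, Prod.mk.injEq]
  have ht : (t : ℤ) ≤ (t ^ 2 : ℕ) := by push_cast; nlinarith
  constructor
  · rintro ⟨⟨-, h⟩, rfl⟩
    have : (a - t) * (a + t) = 0 := by push_cast at h; linear_combination h
    rcases mul_eq_zero.mp this with h | h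
    · exact Or.inl ⟨by omega, rfl⟩
    · exact Or.inr ⟨by omega, rfl⟩
  · rintro (⟨rfl, rfl⟩ | ⟨rfl, rfl⟩) <;> refine ⟨⟨⟨⟨?_, ?_⟩, ?_, ?_⟩, ?_⟩, rfl⟩ <;> push_cast <;> nlinarith

theorem tendsto_deltaAvg_of_not_isSquare {m : ℕ} (hm : 0 < m) (h : ¬IsSquare m) :
    Tendsto (deltaAvg m) atTop (𝓝 0) := by
  simpa [deltaLimit_eq_sum_snd_eq_zero hm, filter_normReps_snd_eq_zero_eq_empty h]
    using tendsto_deltaAvg m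

theorem tendsto_deltaAvg_sq {t : ℕ} (ht : 0 < t) :
    Tendsto (deltaAvg (t ^ 2)) atTop (𝓝 (legendreSym 7 t : ℂ)) := by
  have hunit (a : ℤ) : unitOf (t ^ 2) (a, 0) = a / t := by
    simp [unitOf, toEta, Real.sqrt_sq (Nat.cast_nonneg t)]
  have hpair : ((t : ℤ), (0 : ℤ)) ≠ (-(t : ℤ), 0) := by
    simp only [ne_eq, Prod.mk.injEq, and_true]
    omega
  have hneg : legendreSym 7 (-t) = -legendreSym 7 t := by
    rw [neg_eq_neg_one_mul, legendreSym.mul, show legendreSym 7 (-1) = -1 by decide, neg_one_mul]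
  have ht' : (t : ℂ) ≠ 0 := Nat.cast_ne_zero.mpr ht.ne'
  convert tendsto_deltaAvg (t ^ 2)
  rw [deltaLimit_eq_sum_snd_eq_zero (by positivity), filter_normReps_sq_snd_eq_zero,
    Finset.sum_pair hpair, eps7_mk_zero, eps7_mk_zero, hneg, hunit, hunit]
  push_cast
  field_simp
  ring

theorem delta_multiplicative_values :
    (∀ m : ℕ, 0 < m → ¬ IsSquare m → Tendsto (deltaAvg m) atTop (nhds 0)) ∧
    (∀ m : ℕ, 0 < m → IsSquare m →
      Tendsto (deltaAvg m) atTop (nhds (legendreSym 7 (Nat.sqrt m) : ℂ))) ∧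
    (∀ p : ℕ, p.Prime → p ≠ 7 →
      Tendsto (deltaAvg (p ^ 2)) atTop (nhds (legendreSym 7 p : ℂ)) ∧
      ∀ k : ℕ, 1 ≤ k →
        Tendsto (deltaAvg (p ^ (2 * k))) atTop (nhds ((legendreSym 7 p : ℂ) ^ k))) := by
  refine ⟨fun m hm h => tendsto_deltaAvg_of_not_isSquare hm h, fun m hm ⟨t, ht⟩ => ?_,
    fun p hp _ => ⟨tendsto_deltaAvg_sq hp.pos, fun k _ => ?_⟩⟩
  · subst ht
    rw [Nat.sqrt_eq, ← sq]
    exact tendsto_deltaAvg_sq (Nat.pos_of_mul_pos_left hm)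
  · rw [pow_mul', ← Int.cast_pow, ← legendreSym_pow]
    exact_mod_cast tendsto_deltaAvg_sq (pow_pos hp.pos k)
end

section
/- For integer n ≥ 1 and x > 0, the normalized incomplete gamma function satisfies Γ(n,x)/Γ(n) ≪ e^{-x/n} uniformly in n ≥ 1 and x > 0, where Γ(n,x) = ∫_x^∞ e^{-t} t^{n-1} dt. -/
open Real MeasureTheory

theorem incomplete_gamma_ratio_bound :
    ∃ C : ℝ, 0 < C ∧ ∀ n : ℕ, 1 ≤ n → ∀ x : ℝ, 0 < x →
      (∫ t in Set.Ioi x, Real.exp (-t) * t ^ (n - 1)) ≤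
        C * Real.exp (-x / n) * (Nat.factorial (n - 1)) := by
  refine ⟨Real.exp 2, Real.exp_pos 2, ?_⟩
  intro n hn x hx
  obtain ⟨m, rfl⟩ : ∃ m, n = m + 1 := ⟨n - 1, (Nat.succ_pred_eq_of_pos hn).symm⟩
  simp only [Nat.add_sub_cancel]
  rcases Nat.eq_zero_or_pos m with rfl | hm
  · simp only [pow_zero, mul_one, integral_exp_neg_Ioi]
    have h1 : Real.exp (-x / ((0 + 1 : ℕ) : ℝ)) = Real.exp (-x) := by norm_num
    rw [h1]
    simp only [Nat.factorial_zero, Nat.cast_one, mul_one]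
    have := Real.exp_pos (-x)
    nlinarith [Real.one_le_exp (by norm_num : (0:ℝ) ≤ 2)]
  · set a : ℝ := (m : ℝ) / (m + 1) with ha_def
    have hm1 : (1:ℝ) ≤ (m:ℝ) := by exact_mod_cast hm
    have ha : 0 < a := by positivity
    have hN : (0:ℝ) < (m:ℝ) + 1 := by positivity
    -- integrability of f on Ioi x
    have hf : IntegrableOn (fun t : ℝ => Real.exp (-t) * t ^ m) (Set.Ioi x) := by
      have := (Real.GammaIntegral_convergent (show (0:ℝ) < (m:ℝ) + 1 by positivity)).mono_set
        (Set.Ioi_subset_Ioi hx.le)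
      refine this.congr_fun (fun t ht => ?_) measurableSet_Ioi
      have ht0 : 0 < t := hx.trans ht
      rw [show ((m:ℝ) + 1) - 1 = (m:ℝ) by ring]; simp only [Real.rpow_natCast]
    -- integrability of g on Ioi 0
    have hg0 : IntegrableOn (fun t : ℝ => t ^ (m:ℝ) * Real.exp (-(a * t))) (Set.Ioi 0) := by
      have := integrableOn_rpow_mul_exp_neg_mul_rpow
        (show (-1:ℝ) < (m:ℝ) by linarith) (zero_lt_one' ℝ) ha
      refine this.congr_fun (fun t ht => ?_) measurableSet_Ioi
      simp only [Real.rpow_one, neg_mul]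
    have hg : IntegrableOn (fun t : ℝ => t ^ (m:ℝ) * Real.exp (-(a * t))) (Set.Ioi x) :=
      hg0.mono_set (Set.Ioi_subset_Ioi hx.le)
    -- pointwise bound
    have hpt : ∀ t ∈ Set.Ioi x, Real.exp (-t) * t ^ m ≤
        Real.exp (-x / ((m:ℝ)+1)) * (t ^ (m:ℝ) * Real.exp (-(a * t))) := by
      intro t ht
      have htx : x < t := ht
      have ht0 : 0 < t := hx.trans htx
      rw [Real.rpow_natCast]
      have hsplit : Real.exp (-t) = Real.exp (-t / ((m:ℝ)+1)) * Real.exp (-(a * t)) := by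
        rw [← Real.exp_add]
        congr 1
        rw [ha_def]; field_simp
        ring
      rw [hsplit]
      have hle : Real.exp (-t / ((m:ℝ)+1)) ≤ Real.exp (-x / ((m:ℝ)+1)) := by
        apply Real.exp_le_exp.mpr
        apply div_le_div_of_nonneg_right (by linarith : -t ≤ -x) hN.le
      calc Real.exp (-t / ((m:ℝ)+1)) * Real.exp (-(a * t)) * t ^ m
          = Real.exp (-t / ((m:ℝ)+1)) * (t ^ m * Real.exp (-(a * t))) := by ring
        _ ≤ Real.exp (-x / ((m:ℝ)+1)) * (t ^ m * Real.exp (-(a * t))) := by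
            apply mul_le_mul_of_nonneg_right hle
            positivity
    -- step 1
    have step1 : (∫ t in Set.Ioi x, Real.exp (-t) * t ^ m) ≤
        Real.exp (-x / ((m:ℝ)+1)) * ∫ t in Set.Ioi x, t ^ (m:ℝ) * Real.exp (-(a * t)) := by
      rw [← integral_const_mul]
      exact setIntegral_mono_on hf (hg.const_mul _) measurableSet_Ioi hpt
    -- step 2 : extend integral to Ioi 0
    have step2 : (∫ t in Set.Ioi x, t ^ (m:ℝ) * Real.exp (-(a * t))) ≤
        ∫ t in Set.Ioi 0, t ^ (m:ℝ) * Real.exp (-(a * t)) := by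
      apply setIntegral_mono_set hg0
      · filter_upwards [self_mem_ae_restrict (measurableSet_Ioi : MeasurableSet (Set.Ioi (0:ℝ)))]
          with t ht
        have : 0 < t := ht
        positivity
      · exact HasSubset.Subset.eventuallyLE (Set.Ioi_subset_Ioi hx.le)
    -- value of full integral
    have hval : (∫ t in Set.Ioi 0, t ^ (m:ℝ) * Real.exp (-(a * t))) =
        (1 / a) ^ ((m:ℝ)+1) * Real.Gamma ((m:ℝ)+1) := by
      rw [← Real.integral_rpow_mul_exp_neg_mul_Ioi hN ha]
      apply setIntegral_congr_fun measurableSet_Ioi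
      intro t ht
      rw [show ((m:ℝ) + 1) - 1 = (m:ℝ) by ring]
    have hGamma : Real.Gamma ((m:ℝ)+1) = (Nat.factorial m : ℝ) :=
      Real.Gamma_nat_eq_factorial m
    -- bound on (1/a)^(m+1)
    have hpow : (1 / a) ^ ((m:ℝ)+1) ≤ Real.exp 2 := by
      have h1a : 1 / a = 1 + 1 / (m:ℝ) := by
        rw [ha_def]; field_simp
      have hle : 1 / a ≤ Real.exp (1 / (m:ℝ)) := by
        rw [h1a]
        have := Real.add_one_le_exp (1 / (m:ℝ))
        linarith
      have h0 : (0:ℝ) < 1 / a := by positivity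
      calc (1 / a) ^ ((m:ℝ)+1) ≤ (Real.exp (1 / (m:ℝ))) ^ ((m:ℝ)+1) := by
            apply Real.rpow_le_rpow h0.le hle (by linarith)
        _ = Real.exp (((m:ℝ)+1) / (m:ℝ)) := by
            rw [← Real.exp_one_rpow (1 / (m:ℝ)), ← Real.rpow_mul (Real.exp_pos 1).le,
              Real.exp_one_rpow]
            congr 1
            field_simp
        _ ≤ Real.exp 2 := by
            apply Real.exp_le_exp.mpr
            rw [div_le_iff₀ (by linarith)]
            linarith
    -- assemble
    have hcast : ((m + 1 : ℕ) : ℝ) = (m:ℝ) + 1 := by push_cast; ring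
    rw [hcast]
    have hfact : (0:ℝ) ≤ (Nat.factorial m : ℝ) := by positivity
    have hexpx : (0:ℝ) < Real.exp (-x / ((m:ℝ)+1)) := Real.exp_pos _
    calc (∫ t in Set.Ioi x, Real.exp (-t) * t ^ m)
        ≤ Real.exp (-x / ((m:ℝ)+1)) * ∫ t in Set.Ioi x, t ^ (m:ℝ) * Real.exp (-(a * t)) := step1
      _ ≤ Real.exp (-x / ((m:ℝ)+1)) * ((1 / a) ^ ((m:ℝ)+1) * Real.Gamma ((m:ℝ)+1)) := by
          apply mul_le_mul_of_nonneg_left _ hexpx.le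
          rw [← hval]; exact step2
      _ = (1 / a) ^ ((m:ℝ)+1) * Real.exp (-x / ((m:ℝ)+1)) * (Nat.factorial m : ℝ) := by
          rw [hGamma]; ring
      _ ≤ Real.exp 2 * Real.exp (-x / ((m:ℝ)+1)) * (Nat.factorial m : ℝ) := by
          apply mul_le_mul_of_nonneg_right _ hfact
          exact mul_le_mul_of_nonneg_right hpow hexpx.le
end
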